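/- If (Y_1,…,Y_d) follows the multivariate GLMGA distribution (conditionally independent GlogM(θ/b_j, σ_j) margins given Θ=θ, with Θ ∼ Gamma(a,1)), then the joint density is f(y_1,…,y_d) = Γ(a+d/2) / (Γ(a) Γ(1/2)^d ∏_j σ_j y_j) · ∏_j [ (2b_j)^{σ_j} y_j ]^{-1/(2σ_j)} / [ ∑_j ((2b_j)^{σ_j} y_j)^{-1/σ_j} + 1 ]^{a+d/2}. -/

import Mathlib

open Real MeasureTheory

/-- Generalized log-Moyal GlogM(θ, σ) density. -/
noncomputable def glogmPdf (θ σ y : ℝ) : ℝ :=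
  Real.sqrt θ / (Real.sqrt (2 * π) * σ) * y ^ (-(1 / (2 * σ) + 1)) *
    Real.exp (-(θ / 2) * y ^ (-(1 / σ)))

/-- Gamma(a, 1) density. -/
noncomputable def gammaPdf (a θ : ℝ) : ℝ :=
  θ ^ (a - 1) * Real.exp (-θ) / Real.Gamma a

/-- Joint density of the multivariate GLMGA (MGL) distribution. -/
noncomputable def mglPdf {d : ℕ} (σ : Fin d → ℝ) (a : ℝ) (b : Fin d → ℝ)
    (y : Fin d → ℝ) : ℝ :=
  Real.Gamma (a + d / 2) /
      (Real.Gamma a * Real.Gamma (1/2) ^ d * ∏ j, σ j * y j) *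
    ((∏ j, ((2 * b j) ^ (σ j) * y j) ^ (-(1 / (2 * σ j)))) /
      (∑ j, ((2 * b j) ^ (σ j) * y j) ^ (-(1 / σ j)) + 1) ^ (a + d / 2))

/-- Mixing conditionally independent GlogM(θ/b_j, σ_j) coordinates over Θ ∼ Gamma(a,1)
yields the MGL joint density. -/
theorem mgl_joint_density (d : ℕ) (σ b : Fin d → ℝ) (a : ℝ)
    (hσ : ∀ j, 0 < σ j) (hb : ∀ j, 0 < b j) (ha : 0 < a)
    (y : Fin d → ℝ) (hy : ∀ j, 0 < y j) :
    ∫ θ in Set.Ioi (0:ℝ), (∏ j, glogmPdf (θ / b j) (σ j) (y j)) * gammaPdf a θ =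
      mglPdf σ a b y := by
  classical
  have hπ : (0:ℝ) < π := Real.pi_pos
  set T : ℝ := ∑ j, (2 * b j)⁻¹ * (y j) ^ (-(1 / σ j)) with hTdef
  have hT0 : 0 ≤ T := Finset.sum_nonneg fun j _ => by
    have := hb j; have := hy j; positivity
  set p : ℝ := a + d / 2 with hpdef
  have hp : 0 < p := by positivity
  have hr : 0 < 1 + T := by linarith
  set K : ℝ := ∏ j, (Real.sqrt (2 * π) * Real.sqrt (b j) * σ j)⁻¹ *
      (y j) ^ (-(1 / (2 * σ j) + 1)) with hKdef
  have hstep : Set.EqOn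
      (fun θ => (∏ j, glogmPdf (θ / b j) (σ j) (y j)) * gammaPdf a θ)
      (fun θ => K / Real.Gamma a * (θ ^ (p - 1) * Real.exp (-((1 + T) * θ))))
      (Set.Ioi (0:ℝ)) := by
    intro θ hθ
    have hθ0 : 0 < θ := hθ
    have h1 : ∀ j, glogmPdf (θ / b j) (σ j) (y j)
        = (Real.sqrt θ * ((Real.sqrt (2 * π) * Real.sqrt (b j) * σ j)⁻¹ *
            (y j) ^ (-(1 / (2 * σ j) + 1)))) *
          Real.exp (-(θ * ((2 * b j)⁻¹ * (y j) ^ (-(1 / σ j))))) := by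
      intro j
      rw [glogmPdf, Real.sqrt_div hθ0.le]
      generalize (y j) ^ (-(1 / (2 * σ j) + 1)) = Y
      generalize (y j) ^ (-(1 / σ j)) = Z
      rw [show -(θ / b j / 2) * Z = -(θ * ((2 * b j)⁻¹ * Z)) by ring]
      ring
    simp only [h1]
    rw [Finset.prod_mul_distrib, Finset.prod_mul_distrib, Finset.prod_const,
      ← Real.exp_sum, Finset.card_univ, Fintype.card_fin]
    have hsum : (∑ j, -(θ * ((2 * b j)⁻¹ * (y j) ^ (-(1 / σ j))))) = -(θ * T) := by
      rw [hTdef, Finset.mul_sum, ← Finset.sum_neg_distrib]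
    rw [hsum, ← hKdef, gammaPdf]
    have hsq : Real.sqrt θ ^ d = θ ^ ((d : ℝ) / 2) := by
      rw [Real.sqrt_eq_rpow, ← Real.rpow_natCast (θ ^ ((1:ℝ)/2)) d,
        ← Real.rpow_mul hθ0.le]
      congr 1
      ring
    have hpow : θ ^ ((d:ℝ)/2) * θ ^ (a - 1) = θ ^ (p - 1) := by
      rw [← Real.rpow_add hθ0, hpdef]; ring_nf
    rw [hsq, show -((1 + T) * θ) = -(θ * T) + -θ by ring, Real.exp_add, ← hpow]
    generalize θ ^ ((d:ℝ)/2) = X1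
    generalize θ ^ (a - 1 : ℝ) = X2
    ring
  rw [MeasureTheory.setIntegral_congr_fun measurableSet_Ioi hstep,
    MeasureTheory.integral_const_mul, Real.integral_rpow_mul_exp_neg_mul_Ioi hp hr]
  -- Now the algebra.
  have hΓa : Real.Gamma a ≠ 0 := (Real.Gamma_pos_of_pos ha).ne'
  have hΓh : Real.Gamma (1/2 : ℝ) = Real.sqrt π := Real.Gamma_one_half_eq
  have hclaimS : (∑ j, ((2 * b j) ^ (σ j) * y j) ^ (-(1 / σ j))) = T := by
    refine Finset.sum_congr rfl fun j _ => ?_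
    have hσj := (hσ j).ne'
    have h2b0 : (0:ℝ) ≤ 2 * b j := by have := hb j; positivity
    rw [Real.mul_rpow (Real.rpow_nonneg h2b0 _) (hy j).le, ← Real.rpow_mul h2b0,
      show σ j * -(1 / σ j) = -1 by field_simp, Real.rpow_neg_one]
  have hclaimA : K * (Real.Gamma (1/2:ℝ) ^ d * ∏ j, σ j * y j)
      = ∏ j, ((2 * b j) ^ (σ j) * y j) ^ (-(1 / (2 * σ j))) := by
    rw [hΓh]
    rw [show (Real.sqrt π) ^ d = ∏ _j : Fin d, Real.sqrt π by simp, hKdef,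
      ← Finset.prod_mul_distrib, ← Finset.prod_mul_distrib]
    refine Finset.prod_congr rfl fun j _ => ?_
    have hbj := hb j; have hσj := hσ j; have hyj := hy j
    have h2b0 : (0:ℝ) ≤ 2 * b j := by positivity
    have h2b : ((2 * b j) ^ (σ j) * y j) ^ (-(1 / (2 * σ j)))
        = (2 * b j) ^ (-(1/2) : ℝ) * (y j) ^ (-(1 / (2 * σ j))) := by
      rw [Real.mul_rpow (Real.rpow_nonneg h2b0 _) hyj.le, ← Real.rpow_mul h2b0]
      congr 2
      field_simp
    rw [h2b]
    have h2b' : (2 * b j) ^ (-(1/2) : ℝ) = (Real.sqrt 2 * Real.sqrt (b j))⁻¹ := by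
      rw [Real.rpow_neg h2b0, ← Real.sqrt_eq_rpow, Real.sqrt_mul (by norm_num)]
    have hy' : (y j) ^ (-(1 / (2 * σ j) + 1)) * y j = (y j) ^ (-(1 / (2 * σ j))) := by
      rw [← Real.rpow_add_one hyj.ne']
      norm_num
    rw [h2b', Real.sqrt_mul (by norm_num : (0:ℝ) ≤ 2)]
    have hsπ : Real.sqrt π ≠ 0 := by positivity
    have hs2 : Real.sqrt 2 ≠ 0 := by positivity
    have hsb : Real.sqrt (b j) ≠ 0 := by positivity
    have hσ0 : σ j ≠ 0 := hσj.ne'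
    calc (Real.sqrt 2 * Real.sqrt π * Real.sqrt (b j) * σ j)⁻¹ *
          (y j) ^ (-(1 / (2 * σ j) + 1)) * (Real.sqrt π * (σ j * y j))
        = (Real.sqrt 2 * Real.sqrt (b j))⁻¹ *
          ((y j) ^ (-(1 / (2 * σ j) + 1)) * y j) := by
          generalize (y j) ^ (-(1 / (2 * σ j) + 1)) = Y
          field_simp
      _ = (Real.sqrt 2 * Real.sqrt (b j))⁻¹ * (y j) ^ (-(1 / (2 * σ j))) := by
          rw [hy']
  rw [mglPdf, hclaimS, ← hclaimA, ← hpdef, one_div, Real.inv_rpow hr.le,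
    add_comm T 1]
  have hΓd : Real.Gamma (1/2:ℝ) ^ d ≠ 0 := by rw [hΓh]; positivity
  have hprod : (∏ j, σ j * y j) ≠ 0 := Finset.prod_ne_zero_iff.2 fun j _ => by
    have := hσ j; have := hy j; positivity
  have hrp : ((1 + T) ^ p : ℝ) ≠ 0 := (Real.rpow_pos_of_pos hr p).ne'
  field_simp
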